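/- arXiv:1209.1760 — 2 statements merged into one kernel-verified Lean document; each statement's English description precedes it below -/
import Mathlib

section
/- Let x^n be a sequence in Σ_A and x ∈ Σ_A with finite length l(x). Then x^n → x in Σ_A if and only if for every finite subset F ⊆ A there exists N such that for all n > N: l(x^n) ≥ l(x), the first l(x) entries of x^n equal those of x, and if l(x^n) > l(x) then the (l(x)+1)-st entry of x^n is not in F. -/
open Topology Filter Set

noncomputable section

/-- The set of finite and infinite sequences over the alphabet `A`, encoded as
functions `ℕ → Option A` which, once `none`, stay `none`. -/
def Sig (A : Type*) : Type _ :=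
  {f : ℕ → Option A // ∀ n, f n = none → f (n + 1) = none}

namespace Sig

variable {A : Type*}

/-- The empty sequence `0⃗`. -/
def nil : Sig A := ⟨fun _ => none, fun _ _ => rfl⟩

/-- The length of a sequence, an extended natural number. -/
def len (x : Sig A) : ℕ∞ := sInf {n : ℕ∞ | ∃ k : ℕ, n = (k : ℕ∞) ∧ x.1 k = none}

/-- The finite sequence determined by a list. -/
def ofList (w : List A) : Sig A :=
  ⟨fun n => w[n]?, fun n h => by
    rw [List.getElem?_eq_none_iff] at h ⊢
    omega⟩

/-- The shift map: delete the first entry. -/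
def shift (x : Sig A) : Sig A := ⟨fun n => x.1 (n + 1), fun n h => x.2 _ h⟩

/-- The cylinder set `Z(w)` of all sequences beginning with the finite word `w`. -/
def cyl (w : List A) : Set (Sig A) := {z | ∀ i < w.length, z.1 i = w[i]?}

/-- The generalized cylinder set `Z(w, F)`. -/
def cylF (w : List A) (F : Set A) : Set (Sig A) := cyl w \ ⋃ a ∈ F, cyl (w ++ [a])

/-- The space `X_A = A_∞^ℕ` where `A_∞` is the one-point compactification of the
discrete space `A`. -/
def XA (A : Type*) : Type _ := ℕ → OnePoint A

instance (A : Type*) : TopologicalSpace (XA A) :=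
  letI : TopologicalSpace A := ⊥
  inferInstanceAs (TopologicalSpace (ℕ → OnePoint A))

/-- View a point of `A_∞` as an `Option A` (they are definitionally equal). -/
def toOpt (y : OnePoint A) : Option A := y

open Classical in
/-- The quotient map `Q : X_A → Σ_A`, cutting a sequence over `A_∞` at the first
occurrence of `∞`. -/
def Q (x : XA A) : Sig A :=
  ⟨fun n => if ∃ i ≤ n, x i = OnePoint.infty then none else toOpt (x n), by
    intro n h
    dsimp only at h ⊢
    by_cases hex : ∃ i ≤ n, x i = OnePoint.infty
    · obtain ⟨i, hi, hxi⟩ := hex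
      exact if_pos ⟨i, hi.trans (Nat.le_succ n), hxi⟩
    · rw [if_neg hex] at h
      have : x n = OnePoint.infty := h
      exact absurd ⟨n, le_refl n, this⟩ hex⟩

/-- The quotient topology on `Σ_A` induced by `Q`. -/
instance (A : Type*) : TopologicalSpace (Sig A) :=
  TopologicalSpace.coinduced Q inferInstance

/-- `w` occurs as a subblock of the sequence `x`. -/
def IsSubblock (w : List A) (x : Sig A) : Prop :=
  ∃ k, ∀ i < w.length, x.1 (k + i) = w[i]?

/-- The set of blocks (finite subwords) of elements of `X`. -/
def blocks (X : Set (Sig A)) : Set (List A) := {w | ∃ x ∈ X, IsSubblock w x}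

/-- A shift space: closed, shift invariant, with the infinite-extension property. -/
def IsShiftSpace (X : Set (Sig A)) : Prop :=
  IsClosed X ∧ (∀ x ∈ X, shift x ∈ X) ∧
    ∀ w : List A, ofList w ∈ X → {a : A | (X ∩ cyl (w ++ [a])).Nonempty}.Infinite

/-- A shift space is row-finite if every symbol can be followed by only finitely
many symbols. -/
def RowFinite (X : Set (Sig A)) : Prop := ∀ a : A, {b : A | [a, b] ∈ blocks X}.Finite

/-- The set of infinite sequences avoiding all blocks from `F`. -/
def XFinf (F : Set (List A)) : Set (Sig A) :=
  {x | len x = ⊤ ∧ ∀ w ∈ F, ¬ IsSubblock w x}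

/-- The set of finite sequences with infinitely many extensions into `X_F^inf`. -/
def XFfin (F : Set (List A)) : Set (Sig A) :=
  {x | ∃ w : List A, x = ofList w ∧
    {a : A | (XFinf F ∩ cyl (w ++ [a])).Nonempty}.Infinite}

/-- The shift space `X_F` determined by the forbidden blocks `F`. -/
def XF (F : Set (List A)) : Set (Sig A) := XFinf F ∪ XFfin F

end Sig



namespace Sig

open Classical

variable {A : Type*}

private lemma propagate {z : Sig A} {m n : ℕ} (h : m ≤ n) (hz : z.1 m = none) :
    z.1 n = none := by
  induction n, h using Nat.le_induction with
  | base => exact hz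
  | succ n hmn ih => exact z.2 n ih

/-- The canonical section of `Q`. -/
private def toXA (z : Sig A) : XA A := fun n => show OnePoint A from z.1 n

private lemma infty_iff {y : OnePoint A} : y = OnePoint.infty ↔ toOpt y = none := Iff.rfl

private lemma Q_apply (y : XA A) (n : ℕ) :
    (Q y).1 n = if ∃ i ≤ n, y i = OnePoint.infty then none else toOpt (y n) := rfl

private lemma Q_toXA (z : Sig A) : Q (toXA z) = z := by
  apply Subtype.ext; funext n
  rw [Q_apply]
  by_cases h : ∃ i ≤ n, toXA z i = OnePoint.infty
  · rw [if_pos h]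
    obtain ⟨i, hin, hi⟩ := h
    exact (propagate hin (infty_iff.mp hi)).symm
  · rw [if_neg h]; rfl

private lemma mem_good_iff (w : List A) (F : Finset A) (y : XA A) :
    ((∀ i < w.length, (Q y).1 i = w[i]?) ∧ ∀ a ∈ F, (Q y).1 w.length ≠ some a) ↔
      ((∀ i < w.length, toOpt (y i) = w[i]?) ∧ ∀ a ∈ F, toOpt (y w.length) ≠ some a) := by
  constructor
  · rintro ⟨h1, h2⟩
    have key : ∀ i < w.length, toOpt (y i) = w[i]? := by
      intro i hi
      have hq := h1 i hi
      rw [Q_apply] at hq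
      by_cases hex : ∃ j ≤ i, y j = OnePoint.infty
      · rw [if_pos hex, List.getElem?_eq_getElem hi] at hq
        exact absurd hq (by simp)
      · rwa [if_neg hex] at hq
    refine ⟨key, fun a ha heq => ?_⟩
    have hnoinf : ¬ ∃ j ≤ w.length, y j = OnePoint.infty := by
      rintro ⟨j, hj, hji⟩
      rcases lt_or_eq_of_le hj with hj | hj
      · have := key j hj
        rw [infty_iff.mp hji, List.getElem?_eq_getElem hj] at this
        exact absurd this (by simp)
      · subst hj
        rw [infty_iff.mp hji] at heq
        exact absurd heq (by simp)
    exact h2 a ha (by rw [Q_apply, if_neg hnoinf]; exact heq)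
  · rintro ⟨h1, h2⟩
    constructor
    · intro i hi
      rw [Q_apply, if_neg ?_]
      · exact h1 i hi
      · rintro ⟨j, hj, hji⟩
        have := h1 j (lt_of_le_of_lt hj hi)
        rw [infty_iff.mp hji, List.getElem?_eq_getElem (lt_of_le_of_lt hj hi)] at this
        exact absurd this (by simp)
    · intro a ha
      rw [Q_apply]
      by_cases hex : ∃ j ≤ w.length, y j = OnePoint.infty
      · rw [if_pos hex]; simp
      · rw [if_neg hex]; exact h2 a ha

private lemma single_eq (c : A) :
    {z : OnePoint A | toOpt z = some c} = (fun a : A => (a : OnePoint A)) '' {c} := by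
  ext z
  constructor
  · intro h; exact ⟨c, rfl, h.symm⟩
  · rintro ⟨a, rfl, rfl⟩; rfl

private lemma avoid_eq (F : Finset A) :
    {z : OnePoint A | ∀ a ∈ F, toOpt z ≠ some a} =
      ((fun a : A => (a : OnePoint A)) '' ↑F)ᶜ := by
  ext z
  simp only [Set.mem_setOf_eq, Set.mem_compl_iff, Set.mem_image, Finset.mem_coe, not_exists]
  constructor
  · rintro h a ⟨ha, haz⟩; exact h a ha haz.symm
  · intro h a ha haz; exact h a ⟨ha, haz.symm⟩

private lemma isOpen_single (c : A) :
    letI : TopologicalSpace A := ⊥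
    IsOpen {z : OnePoint A | toOpt z = some c} := by
  letI : TopologicalSpace A := ⊥
  haveI : DiscreteTopology A := ⟨rfl⟩
  rw [single_eq]
  exact OnePoint.isOpen_image_coe.mpr (isOpen_discrete _)

private lemma isClosed_single (c : A) :
    letI : TopologicalSpace A := ⊥
    IsClosed {z : OnePoint A | toOpt z = some c} := by
  letI : TopologicalSpace A := ⊥
  haveI : DiscreteTopology A := ⟨rfl⟩
  rw [single_eq]
  exact OnePoint.isClosed_image_coe.mpr ⟨isClosed_discrete _, Set.finite_singleton c |>.isCompact⟩

private lemma isOpen_avoid (F : Finset A) :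
    letI : TopologicalSpace A := ⊥
    IsOpen {z : OnePoint A | ∀ a ∈ F, toOpt z ≠ some a} := by
  letI : TopologicalSpace A := ⊥
  haveI : DiscreteTopology A := ⟨rfl⟩
  rw [avoid_eq, isOpen_compl_iff]
  exact OnePoint.isClosed_image_coe.mpr ⟨isClosed_discrete _, F.finite_toSet.isCompact⟩

private lemma isClosed_avoid (F : Finset A) :
    letI : TopologicalSpace A := ⊥
    IsClosed {z : OnePoint A | ∀ a ∈ F, toOpt z ≠ some a} := by
  letI : TopologicalSpace A := ⊥
  haveI : DiscreteTopology A := ⟨rfl⟩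
  rw [avoid_eq, isClosed_compl_iff]
  exact OnePoint.isOpen_image_coe.mpr (isOpen_discrete _)

/-- The generalized cylinder set as a subset of `Sig A`. -/
private def cylSet (w : List A) (F : Finset A) : Set (Sig A) :=
  {z : Sig A | (∀ i < w.length, z.1 i = w[i]?) ∧ ∀ a ∈ F, z.1 w.length ≠ some a}

/-- The preimage of the good set in `XA A`. -/
private def VSet (w : List A) (F : Finset A) : Set (XA A) :=
  (⋂ i ∈ Finset.range w.length, (fun y : XA A => y i) ⁻¹' {z | toOpt z = w[i]?}) ∩
    (fun y : XA A => y w.length) ⁻¹' {z | ∀ a ∈ F, toOpt z ≠ some a}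

private lemma mem_VSet_iff (w : List A) (F : Finset A) (y : XA A) :
    y ∈ VSet w F ↔
      ((∀ i < w.length, toOpt (y i) = w[i]?) ∧ ∀ a ∈ F, toOpt (y w.length) ≠ some a) := by
  simp only [VSet, Set.mem_inter_iff, Set.mem_iInter, Finset.mem_range, Set.mem_preimage,
    Set.mem_setOf_eq]

private lemma preimage_cylSet (w : List A) (F : Finset A) :
    Q ⁻¹' cylSet w F = VSet w F := by
  ext y
  rw [Set.mem_preimage, mem_VSet_iff]
  exact mem_good_iff w F y

private lemma isOpen_cylSet (w : List A) (F : Finset A) : IsOpen (cylSet w F) := by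
  letI : TopologicalSpace A := ⊥
  have hV : IsOpen (VSet w F) := by
    apply IsOpen.inter
    · apply isOpen_biInter_finset
      intro i hi
      have hi' : i < w.length := Finset.mem_range.mp hi
      rw [List.getElem?_eq_getElem hi']
      exact (isOpen_single (w[i])).preimage (continuous_apply i)
    · exact (isOpen_avoid F).preimage (continuous_apply w.length)
  exact isOpen_coinduced.mpr (preimage_cylSet w F ▸ hV)

private lemma isClosed_VSet (w : List A) (F : Finset A) : IsClosed (VSet w F) := by
  letI : TopologicalSpace A := ⊥
  apply IsClosed.inter
  · apply isClosed_biInter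
    intro i hi
    have hi' : i < w.length := Finset.mem_range.mp hi
    rw [List.getElem?_eq_getElem hi']
    exact (isClosed_single (w[i])).preimage (continuous_apply i)
  · exact (isClosed_avoid F).preimage (continuous_apply w.length)

private lemma ofList_mem_cylSet (w : List A) (F : Finset A) : ofList w ∈ cylSet w F := by
  refine ⟨fun i hi => rfl, fun a ha h => ?_⟩
  have h0 : w[w.length]? = none := List.getElem?_eq_none le_rfl
  rw [show (ofList w).1 w.length = w[w.length]? from rfl, h0] at h
  cases h

private lemma exists_finset (w : List A) (U : Set (Sig A))
    (hU : IsOpen U) (hw : ofList w ∈ U) : ∃ F : Finset A, cylSet w F ⊆ U := by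
  letI : TopologicalSpace A := ⊥
  by_contra hcon
  push_neg at hcon
  have hQU : IsOpen (Q ⁻¹' U) := hU.preimage continuous_coinduced_rng
  set V : Finset A → Set (XA A) := fun F => (Q ⁻¹' U)ᶜ ∩ VSet w F with hVdef
  have hne : ∀ F, (V F).Nonempty := by
    intro F
    obtain ⟨z, hz1, hz2⟩ := Set.not_subset.mp (hcon F)
    refine ⟨toXA z, ?_, ?_⟩
    · simp only [Set.mem_compl_iff, Set.mem_preimage, Q_toXA]
      exact hz2
    · rw [← preimage_cylSet, Set.mem_preimage, Q_toXA]
      exact hz1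
  haveI : CompactSpace (XA A) := inferInstanceAs (CompactSpace (ℕ → OnePoint A))
  have hcl : ∀ F, IsClosed (V F) :=
    fun F => (isClosed_compl_iff.mpr hQU).inter (isClosed_VSet w F)
  have hdir : Directed (· ⊇ ·) V := by
    intro F G
    refine ⟨F ∪ G, ?_, ?_⟩ <;>
    · intro y hy
      obtain ⟨hy1, hy2⟩ := hy
      rw [mem_VSet_iff] at hy2
      refine ⟨hy1, (mem_VSet_iff w _ y).mpr ⟨hy2.1, fun a ha => hy2.2 a ?_⟩⟩
      simp only [Finset.mem_union]
      first
      | exact Or.inl ha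
      | exact Or.inr ha
  obtain ⟨y, hy⟩ := IsCompact.nonempty_iInter_of_directed_nonempty_isCompact_isClosed V hdir
    hne (fun F => (hcl F).isCompact) hcl
  simp only [Set.mem_iInter] at hy
  have hyC : y ∈ (Q ⁻¹' U)ᶜ := (hy ∅).1
  have h1 : ∀ i < w.length, toOpt (y i) = w[i]? := ((mem_VSet_iff w ∅ y).mp (hy ∅).2).1
  have h2 : toOpt (y w.length) = none := by
    rcases h : toOpt (y w.length) with _ | a
    · rfl
    · exact absurd h (((mem_VSet_iff w {a} y).mp (hy {a}).2).2 a (Finset.mem_singleton_self a))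
  have hQy : Q y = ofList w := by
    apply Subtype.ext; funext n
    rw [Q_apply]
    show _ = w[n]?
    by_cases hn : n < w.length
    · rw [if_neg ?_]
      · exact (h1 n hn).trans (by rw [List.getElem?_eq_getElem hn])
      · rintro ⟨j, hj, hji⟩
        have := h1 j (lt_of_le_of_lt hj hn)
        rw [infty_iff.mp hji, List.getElem?_eq_getElem (lt_of_le_of_lt hj hn)] at this
        exact absurd this (by simp)
    · rw [if_pos ⟨w.length, Nat.le_of_not_lt hn, infty_iff.mpr h2⟩]
      exact (List.getElem?_eq_none (Nat.le_of_not_lt hn)).symm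
  exact hyC (Set.mem_preimage.mpr (hQy ▸ hw))

end Sig


/-- characterization of convergence to a finite sequence in `Σ_A`. -/
theorem stmt5 (A : Type*) [Infinite A] (x : ℕ → Sig A) (w : List A) :
    Tendsto x atTop (𝓝 (Sig.ofList w)) ↔
      ∀ F : Finset A, ∃ N : ℕ, ∀ n > N,
        (∀ i < w.length, (x n).1 i = w[i]?) ∧ ∀ a ∈ F, (x n).1 w.length ≠ some a := by
  constructor
  · intro hx F
    have hev : ∀ᶠ n in atTop, x n ∈ Sig.cylSet w F :=
      hx ((Sig.isOpen_cylSet w F).mem_nhds (Sig.ofList_mem_cylSet w F))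
    obtain ⟨N, hN⟩ := eventually_atTop.mp hev
    exact ⟨N, fun n hn => hN n hn.le⟩
  · intro h
    rw [tendsto_nhds]
    intro U hUo hUm
    obtain ⟨F, hF⟩ := Sig.exists_finset w U hUo hUm
    obtain ⟨N, hN⟩ := h F
    have : ∀ᶠ n in atTop, x n ∈ U :=
      eventually_atTop.mpr ⟨N + 1, fun n hn => hF (hN n (by omega))⟩
    exact this
end
end

section
/- If X ⊆ Σ_A is a shift space, then the set X^inf of infinite sequences in X is dense in X. Consequently, two shift spaces X, Y ⊆ Σ_A are equal if and only if X^inf = Y^inf. -/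
open Topology Filter Set

noncomputable section

namespace Sig
variable {A : Type*}

lemma stays_none (x : Sig A) {i n : ℕ} (h : i ≤ n) (hx : x.1 i = none) : x.1 n = none := by
  induction n, h using Nat.le_induction with
  | base => exact hx
  | succ n _ ih => exact x.2 n ih

/-- Pad a sequence with `∞`'s to get a point of `X_A`. -/
def pad (x : Sig A) : XA A := fun n => (x.1 n).elim OnePoint.infty (fun a => OnePoint.some a)

lemma pad_eq_infty_iff (x : Sig A) (n : ℕ) : pad x n = OnePoint.infty ↔ x.1 n = none := by
  cases h : x.1 n <;> simp [pad, h]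

open Classical in
lemma Q_pad (x : Sig A) : Q (pad x) = x := by
  apply Subtype.ext
  funext n
  show (if ∃ i ≤ n, pad x i = OnePoint.infty then none else toOpt (pad x n)) = x.1 n
  by_cases hex : ∃ i ≤ n, pad x i = OnePoint.infty
  · rw [if_pos hex]
    obtain ⟨i, hi, hxi⟩ := hex
    exact (stays_none x hi ((pad_eq_infty_iff x i).mp hxi)).symm
  · rw [if_neg hex]
    cases h : x.1 n with
    | none => exact absurd ⟨n, le_refl n, (pad_eq_infty_iff x n).mpr h⟩ hex
    | some a => simp [pad, toOpt, h]; rfl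

end Sig
namespace Sig
variable {A : Type*}

lemma pad_eq_some_iff (x : Sig A) (n : ℕ) (b : A) :
    pad x n = OnePoint.some b ↔ x.1 n = some b := by
  cases h : x.1 n with
  | none =>
    simp only [pad, h, Option.elim]
    constructor
    · intro hc; exact absurd hc (by simp)
    · intro hc; exact absurd hc (by simp)
  | some a =>
    simp only [pad, h, Option.elim]
    constructor
    · intro hc; rw [show a = b from Option.some.inj hc]
    · intro hc; rw [Option.some.inj hc]

lemma cyl_getElem? {w : List A} {z : Sig A} (hz : z ∈ cyl w) {i : ℕ} (hi : i < w.length) :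
    z.1 i = some w[i] := by
  rw [hz i hi, List.getElem?_eq_getElem hi]

open Classical in
lemma exists_cylF_subset {w : List A} {V : Set (Sig A)} (hV : IsOpen V) (hw : ofList w ∈ V) :
    ∃ F : Finset A, cylF w ↑F ⊆ V := by
  letI : TopologicalSpace A := ⊥
  haveI : DiscreteTopology A := ⟨rfl⟩
  by_contra hcon
  push_neg at hcon
  have hcon' : ∀ F : Finset A, ∃ z, z ∈ cylF w ↑F ∧ z ∉ V := by
    intro F
    rcases Set.not_subset.mp (hcon F) with ⟨z, hz1, hz2⟩
    exact ⟨z, hz1, hz2⟩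
  choose z hz hznV using hcon'
  set n := w.length with hn
  have hzcyl : ∀ F, z F ∈ cyl w := fun F => (hz F).1
  have hznotext : ∀ (F : Finset A), ∀ b ∈ F, (z F).1 n ≠ some b := by
    intro F b hb hsome
    apply (hz F).2
    refine Set.mem_iUnion₂.mpr ⟨b, hb, ?_⟩
    intro i hi
    have hi' : i < n + 1 := by simpa using hi
    rcases Nat.lt_succ_iff_lt_or_eq.mp hi' with h | h
    · rw [(hzcyl F) i h, List.getElem?_append_left h]
    · subst h
      rw [hsome, List.getElem?_append_right (le_refl _)]
      simp
  have hU : IsOpen (Q ⁻¹' V) := isOpen_coinduced.mp hV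
  have hSclosed : IsClosed ((Q ⁻¹' V)ᶜ : Set (XA A)) := hU.isClosed_compl
  haveI : CompactSpace (XA A) := inferInstanceAs (CompactSpace (ℕ → OnePoint A))
  have hScompact : IsCompact ((Q ⁻¹' V)ᶜ : Set (XA A)) := hSclosed.isCompact
  set y : Finset A → XA A := fun F => pad (z F) with hy
  have hyS : ∀ F, y F ∈ (Q ⁻¹' V)ᶜ := fun F => by
    simp only [Set.mem_compl_iff, Set.mem_preimage, hy, Q_pad]
    exact hznV F
  haveI : (Filter.map y Filter.atTop).NeBot := Filter.map_neBot
  have hle : Filter.map y Filter.atTop ≤ Filter.principal ((Q ⁻¹' V)ᶜ) := by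
    rw [Filter.le_principal_iff, Filter.mem_map]
    exact Filter.univ_mem' hyS
  obtain ⟨x0, hxS, hcl⟩ := hScompact.exists_clusterPt hle
  have hcoord : ∀ i : ℕ, ClusterPt (x0 i) (Filter.map (fun F => y F i) Filter.atTop) := by
    intro i
    have hc : ContinuousAt (fun p : XA A => p i) x0 :=
      (continuous_apply (A := fun _ : ℕ => OnePoint A) i).continuousAt
    exact hcl.map hc (Filter.tendsto_map)
  have hfreq : ∀ (i : ℕ) (O : Set (OnePoint A)), IsOpen O → x0 i ∈ O →
      ∀ F₀ : Finset A, ∃ F, F₀ ≤ F ∧ y F i ∈ O := by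
    intro i O hO hmem F₀
    have hV' : ((fun F => y F i) '' Set.Ici F₀) ∈ Filter.map (fun F => y F i) Filter.atTop := by
      rw [Filter.mem_map]
      exact Filter.mem_of_superset (Filter.Ici_mem_atTop F₀) fun F hF => Set.mem_image_of_mem _ hF
    obtain ⟨v, hvO, ⟨F, hF, rfl⟩⟩ := clusterPt_iff_nonempty.mp (hcoord i) (hO.mem_nhds hmem) hV'
    exact ⟨F, hF, hvO⟩
  -- coordinates below n are the letters of w
  have hlow : ∀ i (hi : i < n), x0 i = OnePoint.some (w[i]'(hn ▸ hi)) := by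
    intro i hi
    by_contra hne
    obtain ⟨F, _, hmem⟩ := hfreq i {OnePoint.some w[i]}ᶜ isClosed_singleton.isOpen_compl hne ∅
    apply hmem
    rw [Set.mem_singleton_iff]
    exact (pad_eq_some_iff (z F) i _).mpr (cyl_getElem? (hzcyl F) hi)
  -- coordinate n is infinity
  have hinfty : x0 n = OnePoint.infty := by
    cases hb : x0 n with
    | infty => rfl
    | coe b =>
      exfalso
      have hopen : IsOpen ({OnePoint.some b} : Set (OnePoint A)) := by
        rw [OnePoint.isOpen_iff_of_notMem (by simp [OnePoint.infty_ne_coe])]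
        exact isOpen_discrete _
      obtain ⟨F, hFb, hmem⟩ := hfreq n {OnePoint.some b} hopen (by rw [hb]; rfl) {b}
      rw [Set.mem_singleton_iff, pad_eq_some_iff] at hmem
      exact hznotext F b (hFb (Finset.mem_singleton_self b)) hmem
  -- hence Q x0 = ofList w
  have hQ : Q x0 = ofList w := by
    apply Subtype.ext
    funext k
    show (if ∃ i ≤ k, x0 i = OnePoint.infty then none else toOpt (x0 k)) = (w[k]? : Option A)
    by_cases hk : k < n
    · rw [if_neg, hlow k hk, List.getElem?_eq_getElem hk]
      · rfl
      · rintro ⟨i, hik, hi⟩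
        rw [hlow i (lt_of_le_of_lt hik hk)] at hi
        exact absurd hi (by simp)
    · rw [if_pos ⟨n, Nat.le_of_not_lt hk, hinfty⟩,
        List.getElem?_eq_none_iff.mpr (Nat.le_of_not_lt hk)]
  rw [Set.mem_compl_iff, Set.mem_preimage, hQ] at hxS
  exact hxS hw

end Sig
namespace Sig
variable {A : Type*}

lemma len_eq_top_iff (x : Sig A) : len x = ⊤ ↔ ∀ k, x.1 k ≠ none := by
  rw [len, sInf_eq_top]
  constructor
  · intro h k hk
    exact absurd (h _ ⟨k, rfl, hk⟩) (ENat.coe_ne_top k)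
  · rintro h a ⟨k, rfl, hk⟩
    exact absurd hk (h k)

lemma exists_ofList (x : Sig A) (hx : len x ≠ ⊤) : ∃ u : List A, x = ofList u := by
  have hex : ∃ k, x.1 k = none := by
    by_contra h
    push_neg at h
    exact hx ((len_eq_top_iff x).mpr h)
  classical
  let m := Nat.find hex
  have hm : x.1 m = none := Nat.find_spec hex
  have hlt : ∀ i, i < m → x.1 i ≠ none := fun i hi => Nat.find_min hex hi
  refine ⟨List.ofFn (fun i : Fin m => (x.1 i).get (Option.isSome_iff_ne_none.mpr (hlt i i.2))), ?_⟩
  apply Subtype.ext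
  funext k
  show x.1 k = (List.ofFn _)[k]?
  by_cases hk : k < m
  · rw [List.getElem?_ofFn]
    simp [List.ofFnNthVal, hk]
  · rw [List.getElem?_eq_none_iff.mpr (by simpa using Nat.le_of_not_lt hk)]
    exact stays_none x (Nat.le_of_not_lt hk) hm

lemma ofList_mem_cyl (u : List A) : ofList u ∈ cyl u := fun _ _ => rfl

lemma cyl_mono {u : List A} {a : A} : cyl (u ++ [a]) ⊆ cyl u := by
  intro z hzc i hi
  rw [hzc i (by simp; omega), List.getElem?_append_left hi]

lemma cyl_trans {u v : List A} (h : ofList v ∈ cyl u) : cyl v ⊆ cyl u := by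
  intro z hz i hi
  have hvu : v[i]? = u[i]? := h i hi
  have hv : i < v.length := by
    by_contra hc
    rw [List.getElem?_eq_none_iff.mpr (Nat.le_of_not_lt hc),
      List.getElem?_eq_getElem hi] at hvu
    exact absurd hvu (by simp)
  rw [hz i hv, hvu]

lemma getElem?_concat (u : List A) (a : A) : (u ++ [a])[u.length]? = some a := by
  rw [List.getElem?_append_right (le_refl _)]
  simp

lemma mem_cyl_concat_iff {u : List A} {a : A} {z : Sig A} :
    z ∈ cyl (u ++ [a]) ↔ z ∈ cyl u ∧ z.1 u.length = some a := by
  constructor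
  · intro h
    refine ⟨cyl_mono h, ?_⟩
    rw [h u.length (by simp), getElem?_concat]
  · rintro ⟨h1, h2⟩ i hi
    have hi' : i < u.length + 1 := by simpa using hi
    rcases Nat.lt_succ_iff_lt_or_eq.mp hi' with h | h
    · rw [h1 i h, List.getElem?_append_left h]
    · subst h
      rw [h2, getElem?_concat]

lemma exists_inf_ext {X : Set (Sig A)} (hX : IsShiftSpace X) {u : List A} (hu : ofList u ∈ X) :
    ∃ z ∈ X, len z = ⊤ ∧ z ∈ cyl u := by
  by_contra hcon
  push_neg at hcon
  have step : ∀ v : List A, ofList v ∈ X → ofList v ∈ cyl u →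
      ∃ v' : List A, ofList v' ∈ X ∧ ofList v' ∈ cyl v ∧ v.length < v'.length := by
    intro v hvX hvu
    obtain ⟨a, x', hx'X, hx'c⟩ := (hX.2.2 v hvX).nonempty
    have hx'v : x' ∈ cyl v := cyl_mono hx'c
    have hfin : len x' ≠ ⊤ := fun htop => hcon x' hx'X htop (cyl_trans hvu hx'v)
    obtain ⟨v', rfl⟩ := exists_ofList x' hfin
    refine ⟨v', hx'X, hx'v, ?_⟩
    have h2 := (mem_cyl_concat_iff.mp hx'c).2
    by_contra hc
    rw [show (ofList v').1 v.length = v'[v.length]? from rfl,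
      List.getElem?_eq_none_iff.mpr (Nat.le_of_not_lt (fun hlt => hc hlt))] at h2
    exact absurd h2 (by simp)
  have hstep : ∀ p : {v : List A // ofList v ∈ X ∧ ofList v ∈ cyl u},
      ∃ q : {v : List A // ofList v ∈ X ∧ ofList v ∈ cyl u},
        ofList q.1 ∈ cyl p.1 ∧ p.1.length < q.1.length := by
    rintro ⟨v, hvX, hvu⟩
    obtain ⟨v', h1, h2, h3⟩ := step v hvX hvu
    exact ⟨⟨v', h1, cyl_trans hvu h2⟩, h2, h3⟩
  choose f hf1 hf2 using hstep
  let v : ℕ → {v : List A // ofList v ∈ X ∧ ofList v ∈ cyl u} :=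
    fun k => f^[k] ⟨u, hu, ofList_mem_cyl u⟩
  have hvsucc : ∀ k, v (k + 1) = f (v k) := fun k => Function.iterate_succ_apply' f k _
  have hlen : ∀ k, k ≤ (v k).1.length := by
    intro k
    induction k with
    | zero => exact Nat.zero_le _
    | succ k ih =>
      have h := hf2 (v k)
      rw [← hvsucc k] at h
      omega
  have hcyl : ∀ j k, j ≤ k → ofList (v k).1 ∈ cyl (v j).1 := by
    intro j k h
    induction k, h using Nat.le_induction with
    | base => exact ofList_mem_cyl _
    | succ k hk ih =>
      have h1 := hf1 (v k)
      rw [← hvsucc k] at h1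
      exact cyl_trans ih h1
  have hzsome : ∀ i : ℕ, ((v (i + 1)).1)[i]? ≠ none := by
    intro i h
    rw [List.getElem?_eq_none_iff] at h
    have := hlen (i + 1)
    omega
  let z : Sig A := ⟨fun i => ((v (i + 1)).1)[i]?, fun i h => absurd h (hzsome i)⟩
  have hzcyl : ∀ k, z ∈ cyl (v k).1 := by
    intro k i hi
    show ((v (i + 1)).1)[i]? = ((v k).1)[i]?
    rcases le_total (i + 1) k with h | h
    · exact (hcyl (i + 1) k h i (lt_of_lt_of_le (Nat.lt_succ_self i) (hlen (i + 1)))).symm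
    · exact hcyl k (i + 1) h i hi
  have hzX : z ∈ X := by
    rw [← hX.1.closure_eq]
    refine mem_closure_iff.mpr (fun o ho hzo => ?_)
    letI : TopologicalSpace A := ⊥
    have hU : IsOpen (Q ⁻¹' o) := isOpen_coinduced.mp ho
    have hpz : pad z ∈ Q ⁻¹' o := by rw [Set.mem_preimage, Q_pad]; exact hzo
    obtain ⟨I, O, hIO, hsub⟩ := isOpen_pi_iff.mp hU (pad z) hpz
    set M := (I.sup id) + 1 with hM
    have hIM : ∀ i ∈ I, i < M := fun i hi => Nat.lt_succ_of_le (Finset.le_sup (f := id) hi)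
    have hmem : pad (ofList (v M).1) ∈ Q ⁻¹' o := by
      apply hsub
      intro i hi
      have hiM : i < (v M).1.length := lt_of_lt_of_le (hIM i hi) (hlen M)
      have heq : pad (ofList (v M).1) i = pad z i := by
        show (((v M).1)[i]? : Option A).elim _ _ = (z.1 i).elim _ _
        rw [hzcyl M i hiM]
      rw [heq]
      exact (hIO i hi).2
    rw [Set.mem_preimage, Q_pad] at hmem
    exact ⟨ofList (v M).1, hmem, (v M).2.1⟩
  have hzlen : len z = ⊤ := (len_eq_top_iff z).mpr hzsome
  exact hcon z hzX hzlen (hzcyl 0)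

lemma dense_inf {X : Set (Sig A)} (hX : IsShiftSpace X) :
    X ⊆ closure {x ∈ X | len x = ⊤} := by
  intro x hx
  by_cases hlen : len x = ⊤
  · exact subset_closure ⟨hx, hlen⟩
  obtain ⟨w, rfl⟩ := exists_ofList x hlen
  refine mem_closure_iff.mpr (fun o ho hwo => ?_)
  obtain ⟨F, hF⟩ := exists_cylF_subset ho hwo
  obtain ⟨a, ha⟩ := ((hX.2.2 w hx).diff F.finite_toSet).nonempty
  obtain ⟨haS, haF⟩ := ha
  obtain ⟨x', hx'X, hx'c⟩ := haS
  obtain ⟨z, hzX, hzlen, hzc⟩ : ∃ z ∈ X, len z = ⊤ ∧ z ∈ cyl (w ++ [a]) := by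
    by_cases hfin : len x' = ⊤
    · exact ⟨x', hx'X, hfin, hx'c⟩
    · obtain ⟨u', rfl⟩ := exists_ofList x' hfin
      obtain ⟨z, hzX, hzlen, hzc⟩ := exists_inf_ext hX hx'X
      exact ⟨z, hzX, hzlen, cyl_trans hx'c hzc⟩
  refine ⟨z, hF ?_, hzX, hzlen⟩
  constructor
  · exact cyl_mono hzc
  · intro hmem
    obtain ⟨b, hbF, hb⟩ := Set.mem_iUnion₂.mp hmem
    have h1 : z.1 w.length = some a := (mem_cyl_concat_iff.mp hzc).2
    have h2 : z.1 w.length = some b := (mem_cyl_concat_iff.mp hb).2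
    rw [h1] at h2
    exact haF (by rw [Option.some.inj h2]; exact hbF)

end Sig
/-- `X^inf` is dense in any shift space `X`; consequently two shift
spaces coincide iff their sets of infinite sequences coincide. -/
theorem stmt9 (A : Type*) :
    (∀ X : Set (Sig A), Sig.IsShiftSpace X → X ⊆ closure {x ∈ X | Sig.len x = ⊤}) ∧
      ∀ X Y : Set (Sig A), Sig.IsShiftSpace X → Sig.IsShiftSpace Y →
        (X = Y ↔ {x ∈ X | Sig.len x = ⊤} = {x ∈ Y | Sig.len x = ⊤}) := by
  refine ⟨fun X hX => Sig.dense_inf hX, fun X Y hX hY => ?_⟩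
  constructor
  · rintro rfl
    rfl
  · intro h
    have hXc : X = closure {x ∈ X | Sig.len x = ⊤} :=
      subset_antisymm (Sig.dense_inf hX) (closure_minimal (fun z hz => hz.1) hX.1)
    have hYc : Y = closure {x ∈ Y | Sig.len x = ⊤} :=
      subset_antisymm (Sig.dense_inf hY) (closure_minimal (fun z hz => hz.1) hY.1)
    rw [hXc, hYc, h]
end
end
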